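/- arXiv:0901.0224 — 2 statements merged into one kernel-verified Lean document; each statement's English description precedes it below -/
import Mathlib

section
/- Let d ≥ 3 and define h(u) = C·e^u + (d-2)·u·e^u − 2d·(e^u − 1) for u ≥ 0, with C = d + 2 + (d-2)·log((d-2)/(2d)). Then h(u) ≥ 0 for all u ≥ 0. -/
/-! The function is `2d - (d - 2) (1 - u - log t) eᵘ` with `t = (d - 2) / (2d)`, and the tangent
line bound `1 - x ≤ e⁻ˣ` at `x = u + log t` gives `t (1 - u - log t) eᵘ ≤ 1`. Equality holds at
`u = -log t`, which is why the constant is sharp. -/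

open Real

theorem one_sub_mul_exp_le_one (x : ℝ) : (1 - x) * exp x ≤ 1 := by
  have h := add_one_le_exp (-x)
  calc (1 - x) * exp x ≤ exp (-x) * exp x := by gcongr; linarith
    _ = 1 := by rw [← exp_add, neg_add_cancel, exp_zero]

theorem mul_one_sub_sub_log_div_mul_exp_le {a b : ℝ} (ha : 0 < a) (hb : 0 < b) (u : ℝ) :
    a * (1 - u - log (a / b)) * exp u ≤ b := by
  have hexp : exp (u + log (a / b)) = a / b * exp u := by
    rw [exp_add, exp_log (div_pos ha hb), mul_comm]
  have h := one_sub_mul_exp_le_one (u + log (a / b))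
  rw [hexp] at h
  calc a * (1 - u - log (a / b)) * exp u
      = b * ((1 - (u + log (a / b))) * (a / b * exp u)) := by field_simp; ring
    _ ≤ b * 1 := by gcongr
    _ = b := mul_one b

theorem stmt_0 (d : ℕ) (hd : 3 ≤ d)
    (C : ℝ) (hC : C = d + 2 + (d - 2) * Real.log ((d - 2) / (2 * d))) :
    ∀ u : ℝ, 0 ≤ u →
      0 ≤ C * Real.exp u + (d - 2) * u * Real.exp u - 2 * d * (Real.exp u - 1) := by
  intro u _
  have hd' : (3 : ℝ) ≤ d := by exact_mod_cast hd
  have h := mul_one_sub_sub_log_div_mul_exp_le (a := (d : ℝ) - 2) (b := 2 * d)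
    (by linarith) (by linarith) u
  rw [hC]
  linarith
end

section
/- Let d ≥ 3, f(u) = e^u, F(u) = e^u. Then G := sup_{z∈ℝ} [2d(F(z) − F(μ)) − (d-2) f(z)(z−μ)]/f(z) is independent of μ and equals d + 2 + (d-2) log((d-2)/(2d)); i.e., for all z, μ ∈ ℝ: 2d(e^z − e^μ) − (d-2)e^z(z−μ) ≤ (d + 2 + (d-2)log((d-2)/(2d))) e^z, with equality for some z. -/
/-! Put `c = (d - 2) / (2d)`. Applying `e^t ≥ 1 + t` at `t = μ - z - log c` and multiplying by
`c e^z` gives `2d e^μ ≥ (d - 2) e^z (1 + μ - z - log c)`, which rearranges to the inequality;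
equality holds exactly at `t = 0`, i.e. `z = μ - log c`. -/

open Real

namespace Real

/-- Young's inequality for the pair `exp`, `a ↦ a log a - a` of convex conjugates. -/
theorem mul_sub_log_add_one_le_exp {a : ℝ} (ha : 0 < a) (y : ℝ) :
    a * (y - log a + 1) ≤ exp y := by
  calc a * (y - log a + 1) ≤ a * exp (y - log a) := by
        gcongr; linarith [add_one_le_exp (y - log a)]
    _ = exp y := by rw [exp_sub, exp_log ha]; field_simp

variable {k m : ℝ}

theorem mul_exp_sub_sub_mul_exp_mul_sub_le (hk : 0 < k) (hm : 0 < m) (z μ : ℝ) :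
    m * (exp z - exp μ) - k * exp z * (z - μ) ≤ (m - k + k * log (k / m)) * exp z := by
  have hyoung := mul_sub_log_add_one_le_exp (by positivity : 0 < k / m * exp z) μ
  rw [log_mul (by positivity) (exp_pos z).ne', log_exp] at hyoung
  have hscaled : k * exp z * (μ - (log (k / m) + z) + 1) ≤ m * exp μ := by
    calc k * exp z * (μ - (log (k / m) + z) + 1)
        = m * (k / m * exp z * (μ - (log (k / m) + z) + 1)) := by field_simp
      _ ≤ m * exp μ := by gcongr
  linarith

theorem mul_exp_sub_sub_mul_exp_mul_sub_eq (hk : 0 < k) (hm : 0 < m) (μ : ℝ) :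
    m * (exp (μ - log (k / m)) - exp μ) - k * exp (μ - log (k / m)) * (μ - log (k / m) - μ) =
      (m - k + k * log (k / m)) * exp (μ - log (k / m)) := by
  have hbalance : k * exp (μ - log (k / m)) = m * exp μ := by
    rw [exp_sub, exp_log (by positivity)]; field_simp
  linear_combination hbalance

end Real

theorem stmt_18 (d : ℕ) (hd : 3 ≤ d) :
    (∀ z μ : ℝ,
      2 * d * (Real.exp z - Real.exp μ) - ((d : ℝ) - 2) * Real.exp z * (z - μ) ≤
        ((d : ℝ) + 2 + ((d : ℝ) - 2) * Real.log (((d : ℝ) - 2) / (2 * d))) * Real.exp z) ∧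
    (∀ μ : ℝ, ∃ z : ℝ,
      2 * d * (Real.exp z - Real.exp μ) - ((d : ℝ) - 2) * Real.exp z * (z - μ) =
        ((d : ℝ) + 2 + ((d : ℝ) - 2) * Real.log (((d : ℝ) - 2) / (2 * d))) * Real.exp z) := by
  have hd3 : (3 : ℝ) ≤ d := by exact_mod_cast hd
  have hk : (0 : ℝ) < d - 2 := by linarith
  have hm : (0 : ℝ) < 2 * d := by linarith
  have hgap : 2 * (d : ℝ) - (d - 2) = d + 2 := by ring
  refine ⟨fun z μ => ?_, fun μ => ⟨μ - log (((d : ℝ) - 2) / (2 * d)), ?_⟩⟩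
  · simpa only [hgap] using mul_exp_sub_sub_mul_exp_mul_sub_le hk hm z μ
  · simpa only [hgap] using mul_exp_sub_sub_mul_exp_mul_sub_eq hk hm μ
end
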